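/- arXiv:1511.07091 — 2 statements merged into one kernel-verified Lean document; each statement's English description precedes it below -/
import Mathlib

section
/- If limsup_{n→∞} |π_n|^{1/n} < 1, then limsup_{n→∞} |φ_{nn}|^{1/n} ≤ limsup_{n→∞} |π_n|^{1/n}. -/
set_option maxHeartbeats 1000000


open scoped RealInnerProductSpace
open Filter

/-- The closed linear span `H_I` of `{X t : t ∈ I}` in a real Hilbert space. -/
noncomputable def hSpan {H : Type*} [NormedAddCommGroup H] [InnerProductSpace ℝ H]
    (X : ℤ → H) (I : Set ℤ) : Submodule ℝ H :=
  (Submodule.span ℝ (X '' I)).topologicalClosure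

/-- The orthogonal projection `P_I v` of `v` onto the closed span `H_I`. -/
noncomputable def projSpan {H : Type*} [NormedAddCommGroup H] [InnerProductSpace ℝ H]
    [CompleteSpace H] (X : ℤ → H) (I : Set ℤ) (v : H) : H :=
  haveI : CompleteSpace (hSpan X I) :=
    (Submodule.isClosed_topologicalClosure _).completeSpace_coe
  (Submodule.orthogonalProjectionOnto (hSpan X I) v : H)

/-- The innovation `ε_t = X_t - ∑_{i ≥ 1} π_i X_{t-i}` of the AR(∞) representation. -/
noncomputable def arEps {H : Type*} [NormedAddCommGroup H] [InnerProductSpace ℝ H]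
    (X : ℤ → H) (π : ℕ → ℝ) (t : ℤ) : H :=
  X t - ∑' i : ℕ, π (i + 1) • X (t - (i + 1 : ℕ))

section Aux
set_option linter.unusedSectionVars false
variable {H : Type*} [NormedAddCommGroup H] [InnerProductSpace ℝ H]

lemma mem_hSpan {X : ℤ → H} {I : Set ℤ} {s : ℤ} (hs : s ∈ I) : X s ∈ hSpan X I :=
  Submodule.le_topologicalClosure _ (Submodule.subset_span ⟨s, hs, rfl⟩)

lemma hSpan_mono {X : ℤ → H} {I J : Set ℤ} (h : I ⊆ J) : hSpan X I ≤ hSpan X J :=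
  Submodule.topologicalClosure_mono (Submodule.span_mono (Set.image_mono h))

lemma inner_hSpan_eq_zero {X : ℤ → H} {I : Set ℤ} {e : H}
    (h : ∀ s ∈ I, ⟪e, X s⟫ = 0) {v : H} (hv : v ∈ hSpan X I) : ⟪e, v⟫ = 0 := by
  have hle : hSpan X I ≤ (ℝ ∙ e)ᗮ := by
    refine Submodule.topologicalClosure_minimal _ ?_ (Submodule.isClosed_orthogonal _)
    rw [Submodule.span_le]
    rintro _ ⟨s, hs, rfl⟩
    exact Submodule.mem_orthogonal_singleton_iff_inner_right.2 (h s hs)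
  exact Submodule.mem_orthogonal_singleton_iff_inner_right.1 (hle hv)

lemma tsum_mem_hSpan {X : ℤ → H} {I : Set ℤ} {f : ℕ → H}
    (hf : ∀ i, f i ∈ hSpan X I) (hsum : Summable f) : (∑' i, f i) ∈ hSpan X I := by
  have hclosed : IsClosed ((hSpan X I : Set H)) := Submodule.isClosed_topologicalClosure _
  exact hclosed.mem_of_tendsto hsum.hasSum.tendsto_sum_nat
    (Filter.Eventually.of_forall fun n => Submodule.sum_mem _ fun i _ => hf i)

lemma icc_image (X : ℤ → H) (a b : ℤ) :
    X '' (Set.Icc a b) = Set.range (fun j : Fin (b + 1 - a).toNat => X (a + (j : ℕ))) := by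
  ext v
  constructor
  · rintro ⟨s, ⟨h1, h2⟩, rfl⟩
    have hm : (s - a).toNat < (b + 1 - a).toNat := by omega
    refine ⟨⟨(s - a).toNat, hm⟩, ?_⟩
    simp only []
    congr 1
    omega
  · rintro ⟨⟨j, hj⟩, rfl⟩
    exact ⟨a + j, ⟨by omega, by omega⟩, rfl⟩

lemma hSpan_fin_mem {X : ℤ → H} {a b : ℤ} {v : H} (hv : v ∈ hSpan X (Set.Icc a b)) :
    ∃ c : Fin (b + 1 - a).toNat → ℝ, v = ∑ j, c j • X (a + (j : ℕ)) := by
  rw [hSpan, icc_image] at hv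
  haveI := FiniteDimensional.span_of_finite ℝ
    (Set.finite_range (fun j : Fin (b + 1 - a).toNat => X (a + (j : ℕ))))
  rw [(Submodule.closed_of_finiteDimensional _).submodule_topologicalClosure_eq] at hv
  obtain ⟨c, hc⟩ := (Submodule.mem_span_range_iff_exists_fun ℝ).1 hv
  exact ⟨c, hc.symm⟩

lemma backward_norm_eq (X : ℤ → H) (γ : ℤ → ℝ)
    (hstat : ∀ s t : ℤ, ⟪X s, X t⟫ = γ (t - s))
    (hsym : ∀ h : ℤ, γ (-h) = γ h)
    (m : ℕ) (c : Fin m → ℝ) (a u : ℤ) :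
    ‖X a - ∑ j, c j • X (a + 1 + (j : ℕ))‖ = ‖X u - ∑ j, c j • X (u - 1 - (j : ℕ))‖ := by
  have hγ0 : ∀ s : ℤ, ⟪X s, X s⟫ = γ 0 := fun s => by rw [hstat]; norm_num
  have h1 : ⟪X a, ∑ j, c j • X (a + 1 + (j : ℕ))⟫ = ∑ j : Fin m, c j * γ (1 + (j : ℕ)) := by
    rw [inner_sum]
    refine Finset.sum_congr rfl fun j _ => ?_
    rw [real_inner_smul_right, hstat]
    congr 2
    omega
  have h2 : ⟪X u, ∑ j, c j • X (u - 1 - (j : ℕ))⟫ = ∑ j : Fin m, c j * γ (1 + (j : ℕ)) := by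
    rw [inner_sum]
    refine Finset.sum_congr rfl fun j _ => ?_
    rw [real_inner_smul_right, hstat]
    have he : u - 1 - (j : ℕ) - u = -(1 + (j : ℕ)) := by omega
    rw [he, hsym]
  have h3 : ⟪∑ j, c j • X (a + 1 + (j : ℕ)), ∑ j, c j • X (a + 1 + (j : ℕ))⟫
      = ∑ j : Fin m, ∑ k : Fin m, c j * (c k * γ ((k : ℕ) - (j : ℕ))) := by
    rw [sum_inner]
    refine Finset.sum_congr rfl fun j _ => ?_
    rw [real_inner_smul_left, inner_sum, Finset.mul_sum]
    refine Finset.sum_congr rfl fun k _ => ?_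
    rw [real_inner_smul_right, hstat]
    have he : a + 1 + (k : ℕ) - (a + 1 + (j : ℕ)) = (k : ℕ) - (j : ℕ) := by omega
    rw [he]
  have h4 : ⟪∑ j, c j • X (u - 1 - (j : ℕ)), ∑ j, c j • X (u - 1 - (j : ℕ))⟫
      = ∑ j : Fin m, ∑ k : Fin m, c j * (c k * γ ((k : ℕ) - (j : ℕ))) := by
    rw [sum_inner]
    refine Finset.sum_congr rfl fun j _ => ?_
    rw [real_inner_smul_left, inner_sum, Finset.mul_sum]
    refine Finset.sum_congr rfl fun k _ => ?_
    rw [real_inner_smul_right, hstat]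
    have he : u - 1 - (k : ℕ) - (u - 1 - (j : ℕ)) = -((k : ℕ) - (j : ℕ)) := by omega
    rw [he, hsym]
  have hsq : ‖X a - ∑ j, c j • X (a + 1 + (j : ℕ))‖ ^ 2
      = ‖X u - ∑ j, c j • X (u - 1 - (j : ℕ))‖ ^ 2 := by
    rw [norm_sub_sq_real, norm_sub_sq_real, ← real_inner_self_eq_norm_sq,
      ← real_inner_self_eq_norm_sq, ← real_inner_self_eq_norm_sq, ← real_inner_self_eq_norm_sq,
      hγ0, hγ0, h1, h2, h3, h4]
  rw [← Real.sqrt_sq (norm_nonneg (X a - ∑ j, c j • X (a + 1 + (j : ℕ)))), hsq,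
    Real.sqrt_sq (norm_nonneg _)]

lemma projSpan_mem [CompleteSpace H] (X : ℤ → H) (I : Set ℤ) (v : H) :
    projSpan X I v ∈ hSpan X I := by
  haveI : CompleteSpace (hSpan X I) :=
    (Submodule.isClosed_topologicalClosure _).completeSpace_coe
  exact (Submodule.orthogonalProjectionOnto (hSpan X I) v).2

lemma projSpan_residual_orth [CompleteSpace H] (X : ℤ → H) (I : Set ℤ) (v : H) {w : H}
    (hw : w ∈ hSpan X I) : ⟪v - projSpan X I v, w⟫ = 0 := by
  haveI : CompleteSpace (hSpan X I) :=
    (Submodule.isClosed_topologicalClosure _).completeSpace_coe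
  rw [real_inner_comm]
  exact (Submodule.sub_starProjection_mem_orthogonal (K := hSpan X I) v) w hw

section Key
variable [CompleteSpace H]
variable (X : ℤ → H) (γ : ℤ → ℝ) (π : ℕ → ℝ) (σε2 : ℝ)

lemma xnorm_const (hstat : ∀ s t : ℤ, ⟪X s, X t⟫ = γ (t - s)) (t : ℤ) : ‖X t‖ = ‖X 0‖ := by
  have h1 : ‖X t‖ ^ 2 = ‖X 0‖ ^ 2 := by
    rw [← real_inner_self_eq_norm_sq, ← real_inner_self_eq_norm_sq, hstat, hstat]
    norm_num
  rw [← Real.sqrt_sq (norm_nonneg (X t)), h1, Real.sqrt_sq (norm_nonneg _)]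

lemma ar_summable (hstat : ∀ s t : ℤ, ⟪X s, X t⟫ = γ (t - s))
    (hπ : Summable fun i : ℕ => |π i|) (t : ℤ) :
    Summable (fun i : ℕ => π (i + 1) • X (t - (i + 1 : ℕ))) := by
  apply Summable.of_norm
  apply Summable.congr ((((_root_.summable_nat_add_iff 1).2 hπ).mul_right ‖X 0‖))
  intro i
  rw [norm_smul, Real.norm_eq_abs, xnorm_const X γ hstat (t - (i + 1 : ℕ))]

lemma ar_tsum_mem (hstat : ∀ s t : ℤ, ⟪X s, X t⟫ = γ (t - s))
    (hπ : Summable fun i : ℕ => |π i|) (t : ℤ) :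
    (∑' i : ℕ, π (i + 1) • X (t - (i + 1 : ℕ))) ∈ hSpan X (Set.Iic (t - 1)) := by
  apply tsum_mem_hSpan _ (ar_summable X γ π hstat hπ t)
  intro i
  exact Submodule.smul_mem _ _ (mem_hSpan (by simp only [Set.mem_Iic]; omega))

lemma eps_dist (hstat : ∀ s t : ℤ, ⟪X s, X t⟫ = γ (t - s))
    (hπ : Summable fun i : ℕ => |π i|)
    (heps_orth : ∀ t s : ℤ, s ≤ t - 1 → ⟪arEps X π t, X s⟫ = 0)
    (heps_var : ∀ t : ℤ, ‖arEps X π t‖ ^ 2 = σε2)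
    (t : ℤ) {v : H} (hv : v ∈ hSpan X (Set.Iic (t - 1))) :
    σε2 ≤ ‖X t - v‖ ^ 2 := by
  set m := ∑' i : ℕ, π (i + 1) • X (t - (i + 1 : ℕ)) with hm
  have hdecomp : X t - v = arEps X π t + (m - v) := by rw [arEps]; abel
  have hmv : m - v ∈ hSpan X (Set.Iic (t - 1)) :=
    Submodule.sub_mem _ (ar_tsum_mem X γ π hstat hπ t) hv
  have horth : ⟪arEps X π t, m - v⟫ = 0 :=
    inner_hSpan_eq_zero (fun s hs => heps_orth t s hs) hmv
  rw [hdecomp, norm_add_sq_real, horth, heps_var]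
  nlinarith [sq_nonneg ‖m - v‖]

lemma key_bound
    (hstat : ∀ s t : ℤ, ⟪X s, X t⟫ = γ (t - s))
    (hπ : Summable fun i : ℕ => |π i|)
    (heps_orth : ∀ t s : ℤ, s ≤ t - 1 → ⟪arEps X π t, X s⟫ = 0)
    (heps_var : ∀ t : ℤ, ‖arEps X π t‖ ^ 2 = σε2)
    (hσε : 0 < σε2)
    (φ : ℕ → ℕ → ℝ)
    (hφ : ∀ k : ℕ, 1 ≤ k → ∀ t : ℤ,
      projSpan X (Set.Icc (t - k) (t - 1)) (X t) = ∑ j ∈ Finset.Icc 1 k, φ k j • X (t - j))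
    (n : ℕ) (hn : 1 ≤ n) :
    |φ n n| * Real.sqrt σε2 ≤ ‖X 0‖ * ∑' i : ℕ, |π (n + i)| := by
  have hsym : ∀ h : ℤ, γ (-h) = γ h := by
    intro h
    have h1 : γ (-h) = ⟪X h, X 0⟫ := by rw [hstat]; norm_num
    rw [h1, real_inner_comm, hstat]; norm_num
  have hφ0 := hφ n hn 0
  have e1 : (0 : ℤ) - 1 = -1 := by norm_num
  set a : ℤ := 0 - (n : ℕ) with ha
  rw [e1] at hφ0
  set p := projSpan X (Set.Icc (a + 1) (-1)) (X a) with hp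
  set r := X a - p with hr
  have hpE : p ∈ hSpan X (Set.Icc (a + 1) (-1)) := projSpan_mem X _ _
  have hrX : ∀ j : ℕ, 1 ≤ j → j ≤ n - 1 → ⟪X ((0 : ℤ) - j), r⟫ = 0 := by
    intro j h1 h2
    rw [real_inner_comm]
    exact projSpan_residual_orth X _ _ (mem_hSpan (Set.mem_Icc.2 ⟨by omega, by omega⟩))
  have hr_ge : Real.sqrt σε2 ≤ ‖r‖ := by
    obtain ⟨c, hc⟩ := hSpan_fin_mem hpE
    have hnorm : ‖r‖ = ‖X 0 - ∑ j, c j • X ((0 : ℤ) - 1 - (j : ℕ))‖ := by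
      rw [hr, hc]
      exact backward_norm_eq X γ hstat hsym _ c a 0
    have hw : (∑ j, c j • X ((0 : ℤ) - 1 - (j : ℕ))) ∈ hSpan X (Set.Iic ((0 : ℤ) - 1)) :=
      Submodule.sum_mem _ fun j _ =>
        Submodule.smul_mem _ _ (mem_hSpan (Set.mem_Iic.2 (by omega)))
    have hd := eps_dist X γ π σε2 hstat hπ heps_orth heps_var 0 hw
    calc Real.sqrt σε2 ≤ Real.sqrt (‖X 0 - ∑ j, c j • X ((0 : ℤ) - 1 - (j : ℕ))‖ ^ 2) :=
          Real.sqrt_le_sqrt hd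
      _ = ‖X 0 - ∑ j, c j • X ((0 : ℤ) - 1 - (j : ℕ))‖ := Real.sqrt_sq (norm_nonneg _)
      _ = ‖r‖ := hnorm.symm
  have hsqrt_pos : 0 < Real.sqrt σε2 := Real.sqrt_pos.2 hσε
  have hr_pos : 0 < ‖r‖ := lt_of_lt_of_le hsqrt_pos hr_ge
  have hrIcc : r ∈ hSpan X (Set.Icc a (-1)) := by
    refine Submodule.sub_mem _ (mem_hSpan (Set.mem_Icc.2 ⟨le_rfl, by omega⟩)) ?_
    exact hSpan_mono (Set.Icc_subset_Icc (by omega) le_rfl) hpE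
  have hrIic : r ∈ hSpan X (Set.Iic (-1)) :=
    hSpan_mono (fun x hx => hx.2) hrIcc
  have hXar : ⟪X a, r⟫ = ‖r‖ ^ 2 := by
    have hpr : ⟪p, r⟫ = 0 := by
      rw [real_inner_comm]; exact projSpan_residual_orth X _ _ hpE
    have hXa : X a = r + p := by rw [hr]; abel
    rw [hXa, inner_add_left, hpr, add_zero, real_inner_self_eq_norm_sq]
  have hsum_proj : ⟪projSpan X (Set.Icc a (-1)) (X 0), r⟫ = φ n n * ‖r‖ ^ 2 := by
    rw [hφ0, sum_inner, Finset.sum_eq_single n]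
    · rw [real_inner_smul_left, show ((0 : ℤ) - (n : ℕ)) = a from ha.symm, hXar]
    · intro j hj hjn
      rw [real_inner_smul_left,
        hrX j (Finset.mem_Icc.1 hj).1 (by have := (Finset.mem_Icc.1 hj).2; omega), mul_zero]
    · intro hcon
      exact absurd (Finset.mem_Icc.2 ⟨hn, le_rfl⟩) hcon
  have hX0r : ⟪X 0, r⟫ = φ n n * ‖r‖ ^ 2 := by
    have hres : ⟪X 0 - projSpan X (Set.Icc a (-1)) (X 0), r⟫ = 0 :=
      projSpan_residual_orth X _ _ hrIcc
    rw [inner_sub_left] at hres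
    linarith [hsum_proj]
  set f : ℕ → ℝ := fun i => π (i + 1) * ⟪X ((0 : ℤ) - (i + 1 : ℕ)), r⟫ with hf
  have hfabs : ∀ i : ℕ, |f i| ≤ |π (i + 1)| * (‖X 0‖ * ‖r‖) := by
    intro i
    rw [hf, abs_mul]
    refine mul_le_mul_of_nonneg_left ?_ (abs_nonneg _)
    calc |⟪X ((0 : ℤ) - (i + 1 : ℕ)), r⟫| ≤ ‖X ((0 : ℤ) - (i + 1 : ℕ))‖ * ‖r‖ :=
        abs_real_inner_le_norm _ _
      _ = ‖X 0‖ * ‖r‖ := by rw [xnorm_const X γ hstat]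
  have hsummable_bound : Summable fun i : ℕ => |π (i + 1)| * (‖X 0‖ * ‖r‖) :=
    ((_root_.summable_nat_add_iff 1).2 hπ).mul_right _
  have hfabs_summable : Summable fun i => |f i| :=
    Summable.of_nonneg_of_le (fun i => abs_nonneg _) hfabs hsummable_bound
  have hfsummable : Summable f := hfabs_summable.of_abs
  have htsum_inner : ⟪∑' i : ℕ, π (i + 1) • X ((0 : ℤ) - (i + 1 : ℕ)), r⟫ = ∑' i, f i := by
    calc ⟪∑' i : ℕ, π (i + 1) • X ((0 : ℤ) - (i + 1 : ℕ)), r⟫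
        = ⟪r, ∑' i : ℕ, π (i + 1) • X ((0 : ℤ) - (i + 1 : ℕ))⟫ := real_inner_comm _ _
      _ = ∑' i : ℕ, ⟪r, π (i + 1) • X ((0 : ℤ) - (i + 1 : ℕ))⟫ := by
          exact (innerSL ℝ r).map_tsum (ar_summable X γ π hstat hπ 0)
      _ = ∑' i, f i := tsum_congr fun i => by
          rw [real_inner_smul_right, real_inner_comm]
  have heps_r : ⟪arEps X π 0, r⟫ = 0 :=
    inner_hSpan_eq_zero (fun s hs => heps_orth 0 s (by simpa using hs)) hrIic
  have hX0decomp : ⟪X 0, r⟫ = ∑' i, f i := by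
    have hX0 : X 0 = arEps X π 0 + ∑' i : ℕ, π (i + 1) • X ((0 : ℤ) - (i + 1 : ℕ)) := by
      rw [arEps]; abel
    rw [hX0, inner_add_left, heps_r, zero_add, htsum_inner]
  have hsplit := Summable.sum_add_tsum_nat_add (f := f) (n - 1) hfsummable
  have hfirst : ∑ i ∈ Finset.range (n - 1), f i = 0 :=
    Finset.sum_eq_zero fun i hi => by
      rw [hf]
      simp only []
      rw [hrX (i + 1) (by omega) (by have := Finset.mem_range.1 hi; omega), mul_zero]
  have htsum_tail : ∑' i, f i = ∑' i, f (i + (n - 1)) := by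
    rw [← hsplit, hfirst, zero_add]
  have htail_bound : |∑' i, f (i + (n - 1))| ≤ (∑' i : ℕ, |π (n + i)|) * (‖X 0‖ * ‖r‖) := by
    have hsum1 : Summable fun i => |f (i + (n - 1))| :=
      (_root_.summable_nat_add_iff (n - 1)).2 hfabs_summable
    have hsum2 : Summable fun i : ℕ => |π (n + i)| * (‖X 0‖ * ‖r‖) := by
      have : Summable fun i : ℕ => |π (i + n)| := (_root_.summable_nat_add_iff n).2 hπ
      exact (this.congr fun i => by rw [Nat.add_comm]).mul_right _
    calc |∑' i, f (i + (n - 1))| ≤ ∑' i, |f (i + (n - 1))| := by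
          have := norm_tsum_le_tsum_norm (f := fun i => f (i + (n - 1)))
            (hsum1.congr fun i => (Real.norm_eq_abs _).symm)
          simpa [Real.norm_eq_abs] using this
      _ ≤ ∑' i : ℕ, |π (n + i)| * (‖X 0‖ * ‖r‖) := by
          refine Summable.tsum_le_tsum (fun i => ?_) hsum1 hsum2
          have he : i + (n - 1) + 1 = n + i := by omega
          calc |f (i + (n - 1))| ≤ |π (i + (n - 1) + 1)| * (‖X 0‖ * ‖r‖) := hfabs _
            _ = |π (n + i)| * (‖X 0‖ * ‖r‖) := by rw [he]
      _ = (∑' i : ℕ, |π (n + i)|) * (‖X 0‖ * ‖r‖) := tsum_mul_right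
  have hmain : |φ n n| * ‖r‖ ^ 2 ≤ (∑' i : ℕ, |π (n + i)|) * (‖X 0‖ * ‖r‖) := by
    have h1 : |φ n n| * ‖r‖ ^ 2 = |φ n n * ‖r‖ ^ 2| := by
      rw [abs_mul, abs_of_nonneg (sq_nonneg ‖r‖)]
    rw [h1, ← hX0r, hX0decomp, htsum_tail]
    exact htail_bound
  -- conclude
  have hT_nonneg : 0 ≤ ∑' i : ℕ, |π (n + i)| :=
    tsum_nonneg fun i => abs_nonneg _
  nlinarith [abs_nonneg (φ n n), norm_nonneg (X 0), hr_ge, hr_pos, hsqrt_pos,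
    mul_le_mul_of_nonneg_left hr_ge (abs_nonneg (φ n n))]

end Key

end Aux

/-- If `limsup |π_n|^{1/n} < 1`, then `limsup |φ_{nn}|^{1/n} ≤ limsup |π_n|^{1/n}`. -/
theorem pacf_decay_rate_le_ar_decay_rate
    {H : Type*} [NormedAddCommGroup H] [InnerProductSpace ℝ H] [CompleteSpace H]
    (X : ℤ → H) (γ : ℤ → ℝ) (π : ℕ → ℝ) (σε2 : ℝ)
    (hstat : ∀ s t : ℤ, ⟪X s, X t⟫ = γ (t - s))
    (hπ : Summable fun i : ℕ => |π i|)
    (heps_orth : ∀ t s : ℤ, s ≤ t - 1 → ⟪arEps X π t, X s⟫ = 0)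
    (heps_var : ∀ t : ℤ, ‖arEps X π t‖ ^ 2 = σε2)
    (hσε : 0 < σε2)
    (φ : ℕ → ℕ → ℝ)
    (hφ : ∀ k : ℕ, 1 ≤ k → ∀ t : ℤ,
      projSpan X (Set.Icc (t - k) (t - 1)) (X t) = ∑ j ∈ Finset.Icc 1 k, φ k j • X (t - j))
    (hlt : Filter.limsup (fun n : ℕ => |π n| ^ (1 / (n : ℝ))) Filter.atTop < 1) :
    Filter.limsup (fun n : ℕ => |φ n n| ^ (1 / (n : ℝ))) Filter.atTop
      ≤ Filter.limsup (fun n : ℕ => |π n| ^ (1 / (n : ℝ))) Filter.atTop := by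
  set ρ := Filter.limsup (fun n : ℕ => |π n| ^ (1 / (n : ℝ))) Filter.atTop with hρdef
  have hK_pos : 0 < ‖X 0‖ := by
    have h0 := eps_dist X γ π σε2 hstat hπ heps_orth heps_var 0 (Submodule.zero_mem _)
    rw [sub_zero] at h0
    nlinarith [norm_nonneg (X 0)]
  have hsqrt_pos : 0 < Real.sqrt σε2 := Real.sqrt_pos.2 hσε
  set C := ‖X 0‖ / Real.sqrt σε2 with hC
  have hC_pos : 0 < C := div_pos hK_pos hsqrt_pos
  have hkey : ∀ n : ℕ, 1 ≤ n → |φ n n| ≤ C * ∑' i : ℕ, |π (n + i)| := by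
    intro n hn
    have hk := key_bound X γ π σε2 hstat hπ heps_orth heps_var hσε φ hφ n hn
    rw [hC, div_mul_eq_mul_div, le_div_iff₀ hsqrt_pos]
    linarith
  have hπ_nonneg : ∀ n : ℕ, 0 ≤ |π n| ^ (1 / (n : ℝ)) :=
    fun n => Real.rpow_nonneg (abs_nonneg _) _
  have hbdd_le : IsBoundedUnder (· ≤ ·) atTop (fun n : ℕ => |π n| ^ (1 / (n : ℝ))) := by
    refine isBoundedUnder_of ⟨max (∑' i : ℕ, |π i|) 1, fun n => ?_⟩
    rcases le_or_gt (|π n|) 1 with h | h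
    · exact le_max_of_le_right (Real.rpow_le_one (abs_nonneg _) h (by positivity))
    · rcases Nat.eq_zero_or_pos n with rfl | hn
      · simp
      · refine le_max_of_le_left ?_
        calc |π n| ^ (1 / (n : ℝ)) ≤ |π n| ^ (1 : ℝ) :=
              Real.rpow_le_rpow_of_exponent_le h.le (by
                rw [div_le_one (by exact_mod_cast hn)]
                exact_mod_cast hn)
          _ = |π n| := Real.rpow_one _
          _ ≤ ∑' i : ℕ, |π i| := Summable.le_tsum hπ n fun _ _ => abs_nonneg _
  have hρ_nonneg : 0 ≤ ρ :=
    le_limsup_of_frequently_le (Filter.Frequently.of_forall hπ_nonneg) hbdd_le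
  have hmain : ∀ ρ' : ℝ, ρ < ρ' → ρ' < 1 →
      Filter.limsup (fun n : ℕ => |φ n n| ^ (1 / (n : ℝ))) Filter.atTop ≤ ρ' := by
    intro ρ' h1 h2
    have hρ'_pos : 0 < ρ' := lt_of_le_of_lt hρ_nonneg h1
    have hev : ∀ᶠ n in atTop, |π n| ^ (1 / (n : ℝ)) < ρ' :=
      eventually_lt_of_limsup_lt h1 hbdd_le
    obtain ⟨N, hN⟩ := eventually_atTop.1 hev
    have hπ_pt : ∀ m : ℕ, N ≤ m → 1 ≤ m → |π m| ≤ ρ' ^ m := by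
      intro m hm1 hm2
      have h3 : |π m| ^ (1 / (m : ℝ)) ≤ ρ' := (hN m hm1).le
      have h4 : (|π m| ^ (1 / (m : ℝ))) ^ m ≤ ρ' ^ m :=
        pow_le_pow_left₀ (Real.rpow_nonneg (abs_nonneg _) _) h3 m
      rwa [← Real.rpow_natCast (|π m| ^ (1 / (m : ℝ))) m, ← Real.rpow_mul (abs_nonneg _),
        one_div, inv_mul_cancel₀ (by positivity : (m : ℝ) ≠ 0), Real.rpow_one] at h4
    set C' := C * (1 - ρ')⁻¹ with hC'
    have hC'_pos : 0 < C' := mul_pos hC_pos (inv_pos.2 (by linarith))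
    have hbound : ∀ n : ℕ, N ≤ n → 1 ≤ n → |φ n n| ≤ C' * ρ' ^ n := by
      intro n hn1 hn2
      have hs1 : Summable fun i : ℕ => |π (n + i)| :=
        ((_root_.summable_nat_add_iff n).2 hπ).congr fun i => by rw [Nat.add_comm]
      have hs2 : Summable fun i : ℕ => ρ' ^ (n + i) := by
        have := (summable_geometric_of_lt_one hρ'_pos.le h2).mul_left (ρ' ^ n)
        exact this.congr fun i => by rw [← pow_add]
      have htail : (∑' i : ℕ, |π (n + i)|) ≤ ρ' ^ n * (1 - ρ')⁻¹ := by
        have hle : ∀ i : ℕ, |π (n + i)| ≤ ρ' ^ (n + i) :=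
          fun i => hπ_pt (n + i) (by omega) (by omega)
        calc (∑' i : ℕ, |π (n + i)|) ≤ ∑' i : ℕ, ρ' ^ (n + i) := Summable.tsum_le_tsum hle hs1 hs2
          _ = ρ' ^ n * (1 - ρ')⁻¹ := by
            rw [tsum_congr (fun i => pow_add ρ' n i), tsum_mul_left,
              tsum_geometric_of_lt_one hρ'_pos.le h2]
      calc |φ n n| ≤ C * ∑' i : ℕ, |π (n + i)| := hkey n hn2
        _ ≤ C * (ρ' ^ n * (1 - ρ')⁻¹) := mul_le_mul_of_nonneg_left htail hC_pos.le
        _ = C' * ρ' ^ n := by rw [hC']; ring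
    have hfφ_le : ∀ᶠ n : ℕ in atTop,
        |φ n n| ^ (1 / (n : ℝ)) ≤ C' ^ (1 / (n : ℝ)) * ρ' := by
      filter_upwards [eventually_ge_atTop N, eventually_ge_atTop 1] with n hn1 hn2
      have h5 : |φ n n| ^ (1 / (n : ℝ)) ≤ (C' * ρ' ^ n) ^ (1 / (n : ℝ)) :=
        Real.rpow_le_rpow (abs_nonneg _) (hbound n hn1 hn2) (by positivity)
      have h6 : (C' * ρ' ^ n) ^ (1 / (n : ℝ))
          = C' ^ (1 / (n : ℝ)) * (ρ' ^ n) ^ (1 / (n : ℝ)) :=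
        Real.mul_rpow hC'_pos.le (pow_nonneg hρ'_pos.le n)
      have h7 : ((ρ' : ℝ) ^ n) ^ (1 / (n : ℝ)) = ρ' := by
        rw [← Real.rpow_natCast ρ' n, ← Real.rpow_mul hρ'_pos.le,
          mul_one_div, div_self (by positivity : (n : ℝ) ≠ 0), Real.rpow_one]
      rw [h6, h7] at h5
      exact h5
    have hg_tendsto : Tendsto (fun n : ℕ => C' ^ (1 / (n : ℝ)) * ρ') atTop (nhds ρ') := by
      have h8 : Tendsto (fun n : ℕ => C' ^ (1 / (n : ℝ))) atTop (nhds 1) := by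
        have h9 : ContinuousAt (fun x : ℝ => C' ^ x) 0 :=
          Real.continuousAt_const_rpow hC'_pos.ne'
        have h10 := h9.tendsto.comp tendsto_one_div_atTop_nhds_zero_nat
        simpa [Real.rpow_zero, Function.comp_def] using h10
      have h11 := h8.mul_const ρ'
      simpa using h11
    calc Filter.limsup (fun n : ℕ => |φ n n| ^ (1 / (n : ℝ))) Filter.atTop
        ≤ Filter.limsup (fun n : ℕ => C' ^ (1 / (n : ℝ)) * ρ') Filter.atTop :=
          limsup_le_limsup hfφ_le
            (isCoboundedUnder_le_of_le atTop fun n => Real.rpow_nonneg (abs_nonneg (φ n n)) _)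
            hg_tendsto.isBoundedUnder_le
      _ = ρ' := hg_tendsto.limsup_eq
  refine le_of_forall_pos_le_add fun ε hε => ?_
  have h1 : ρ < min (ρ + ε) ((ρ + 1) / 2) := lt_min (by linarith) (by linarith)
  have h2 : min (ρ + ε) ((ρ + 1) / 2) < 1 :=
    lt_of_le_of_lt (min_le_right _ _) (by linarith)
  exact (hmain _ h1 h2).trans ((min_le_left _ _).trans (le_refl _))
end

section
/- The leading h-step-ahead prediction coefficients are uniformly bounded: for all k ≥ 1 and h ≥ 1, |φ^{(h)}_{k1}| ≤ √(γ(0)/σ_ε²). -/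
open scoped RealInnerProductSpace
open Filter

theorem norm_projSpan_le {H : Type*} [NormedAddCommGroup H] [InnerProductSpace ℝ H]
    [CompleteSpace H] (X : ℤ → H) (I : Set ℤ) (v : H) :
    ‖projSpan X I v‖ ≤ ‖v‖ := by
  haveI : CompleteSpace (hSpan X I) :=
    (Submodule.isClosed_topologicalClosure _).completeSpace_coe
  have h2 := (Submodule.orthogonalProjectionOnto (hSpan X I)).le_opNorm v
  have h3 := Submodule.orthogonalProjectionOnto_norm_le (hSpan X I)
  have h4 : ‖Submodule.orthogonalProjectionOnto (hSpan X I) v‖ ≤ ‖v‖ := by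
    refine le_trans h2 ?_
    have := norm_nonneg v
    nlinarith
  exact h4
/-- The leading h-step-ahead prediction coefficients are uniformly bounded:
for all `k ≥ 1` and `h ≥ 1`, `|φ^{(h)}_{k1}| ≤ √(γ(0)/σ_ε²)`. -/
theorem leading_prediction_coeff_uniformly_bounded
    {H : Type*} [NormedAddCommGroup H] [InnerProductSpace ℝ H] [CompleteSpace H]
    (X : ℤ → H) (γ : ℤ → ℝ) (π : ℕ → ℝ) (σε2 : ℝ)
    (hstat : ∀ s t : ℤ, ⟪X s, X t⟫ = γ (t - s))
    (hπ : Summable fun i : ℕ => |π i|)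
    (heps_orth : ∀ t s : ℤ, s ≤ t - 1 → ⟪arEps X π t, X s⟫ = 0)
    (heps_var : ∀ t : ℤ, ‖arEps X π t‖ ^ 2 = σε2)
    (hσε : 0 < σε2)
    (φh : ℕ → ℕ → ℕ → ℝ)
    (hφh : ∀ h k : ℕ, 1 ≤ h → 1 ≤ k → ∀ t : ℤ,
      projSpan X (Set.Icc (t - k) (t - 1)) (X (t + h - 1))
        = ∑ j ∈ Finset.Icc 1 k, φh h k j • X (t - j)) :
    ∀ k h : ℕ, 1 ≤ k → 1 ≤ h → |φh h k 1| ≤ Real.sqrt (γ 0 / σε2) := by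
  intro k h hk hh
  -- norms of the process
  have hγ0 : ∀ s : ℤ, ‖X s‖ ^ 2 = γ 0 := by
    intro s
    have := hstat s s
    simp only [sub_self] at this
    rw [← this, real_inner_self_eq_norm_sq]
  have hγ0nonneg : 0 ≤ γ 0 := by rw [← hγ0 0]; positivity
  have hXnorm : ∀ s : ℤ, ‖X s‖ = Real.sqrt (γ 0) := by
    intro s; rw [← hγ0 s, Real.sqrt_sq (norm_nonneg _)]
  -- the key identity: ⟪ε_s, X_s⟫ = σε2
  have key : ∀ s : ℤ, ⟪arEps X π s, X s⟫ = σε2 := by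
    intro s
    have hS : Summable fun i : ℕ => π (i + 1) • X (s - (i + 1 : ℕ)) := by
      apply Summable.of_norm
      have h1 : Summable fun i : ℕ => |π (i + 1)| := (summable_nat_add_iff 1).mpr hπ
      apply (h1.mul_right (Real.sqrt (γ 0))).congr
      intro i
      rw [norm_smul, Real.norm_eq_abs, hXnorm]
    have hXs : X s = arEps X π s + ∑' i : ℕ, π (i + 1) • X (s - (i + 1 : ℕ)) := by
      rw [arEps]; abel
    have hzero : ⟪arEps X π s, ∑' i : ℕ, π (i + 1) • X (s - (i + 1 : ℕ))⟫ = 0 := by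
      show (innerSL ℝ (arEps X π s)) (∑' i : ℕ, π (i + 1) • X (s - (i + 1 : ℕ))) = 0
      rw [(innerSL ℝ (arEps X π s)).map_tsum hS]
      have : ∀ i : ℕ, (innerSL ℝ (arEps X π s)) (π (i + 1) • X (s - (i + 1 : ℕ))) = 0 := by
        intro i
        have hle : (s - (i + 1 : ℕ) : ℤ) ≤ s - 1 := by push_cast; omega
        rw [innerSL_apply_apply, real_inner_smul_right, heps_orth s _ hle, mul_zero]
      simp only [this, tsum_zero]
    rw [hXs, inner_add_right, hzero, add_zero, real_inner_self_eq_norm_sq, heps_var]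
  -- specialize the projection identity at t = 0
  have hp := hφh h k hh hk 0
  set ε : H := arEps X π (-1) with hε
  have hεorth : ∀ s : ℤ, s ≤ -2 → ⟪ε, X s⟫ = 0 := by
    intro s hs
    exact heps_orth (-1) s (by omega)
  have hnε : ‖ε‖ = Real.sqrt σε2 := by
    rw [hε, ← heps_var (-1), Real.sqrt_sq (norm_nonneg _)]
  -- compute the inner product of the projection with ε
  have hinner : ⟪projSpan X (Set.Icc ((0:ℤ) - k) (0 - 1)) (X (0 + h - 1)), ε⟫
      = φh h k 1 * σε2 := by
    rw [hp, sum_inner]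
    rw [Finset.sum_eq_single 1]
    · have h1 : ((0:ℤ) - (1:ℕ)) = -1 := by simp
      rw [real_inner_smul_left, real_inner_comm, h1, hε, key]
    · intro j hj hne
      have hj1 : 1 ≤ j := (Finset.mem_Icc.mp hj).1
      have hle : ((0:ℤ) - j) ≤ -2 := by
        have : 2 ≤ j := by omega
        push_cast; omega
      rw [real_inner_smul_left, real_inner_comm, hεorth _ hle, mul_zero]
    · intro h1
      exact absurd (Finset.mem_Icc.mpr ⟨le_refl 1, hk⟩) h1
  -- bound the norm of the projection
  have hnproj : ‖projSpan X (Set.Icc ((0:ℤ) - k) (0 - 1)) (X (0 + h - 1))‖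
      ≤ Real.sqrt (γ 0) := by
    rw [← hXnorm (0 + h - 1)]
    exact norm_projSpan_le X _ _
  -- put it together
  have hbound : |φh h k 1| * σε2 ≤ Real.sqrt (γ 0) * Real.sqrt σε2 := by
    have hcs := abs_real_inner_le_norm
      (projSpan X (Set.Icc ((0:ℤ) - k) (0 - 1)) (X (0 + h - 1))) ε
    rw [hinner, abs_mul, abs_of_pos hσε, hnε] at hcs
    calc |φh h k 1| * σε2 ≤ ‖projSpan X (Set.Icc ((0:ℤ) - k) (0 - 1)) (X (0 + h - 1))‖
        * Real.sqrt σε2 := hcs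
      _ ≤ Real.sqrt (γ 0) * Real.sqrt σε2 := by gcongr
  have hσsqrt : (0:ℝ) < Real.sqrt σε2 := Real.sqrt_pos.mpr hσε
  rw [Real.sqrt_div hγ0nonneg, le_div_iff₀ hσsqrt]
  nlinarith [hbound, hσsqrt, Real.mul_self_sqrt hσε.le, abs_nonneg (φh h k 1)]
end
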